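/- arXiv:2303.05842 — 2 statements merged into one kernel-verified Lean document; each statement's English description precedes it below -/
import Mathlib

section
/- For every z ≥ 0 the function y ↦ Φ(y,z) is λ-convex on [0,∞): for all θ ∈ [0,1] and all y_a, y_b ∈ [0,∞) there holds Φ(θy_a + (1−θ)y_b, z) ≤ θΦ(y_a,z) + (1−θ)Φ(y_b,z) + (λ/2)·θ(1−θ)·|y_a − y_b|². -/
set_option autoImplicit false

/-!
Adding `λ/2 · y²` to `Φ(·, z)` gives a function that is differentiable on `(0, ∞)` with
derivative `(ψ'(z)/z + λ) y` below `z` and `ψ'(y) + λ y` above `z`; the two pieces agree at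
`y = z`. The first is nondecreasing because `ψ' ≥ 0` (as `ψ` is increasing), the second
because `ψ'' ≥ -λ`. A continuous function with nondecreasing derivative is convex, and convexity
of `Φ(·, z) + λ/2 · y²` is exactly `λ`-convexity of `Φ(·, z)`.
-/

open Set

lemma monotoneOn_add_mul_of_hasDerivWithinAt {D : Set ℝ} (hD : Convex ℝ D) {f f' : ℝ → ℝ}
    {c : ℝ} (hf : ∀ x ∈ D, HasDerivWithinAt f (f' x) D x) (hf' : ∀ x ∈ D, -c ≤ f' x) :
    MonotoneOn (fun x => f x + c * x) D :=
  monotoneOn_of_hasDerivWithinAt_nonneg (f' := fun x => f' x + c) hD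
    (fun x hx => (hf x hx).continuousWithinAt.add
      (continuousWithinAt_const.mul continuousWithinAt_id))
    (fun x hx => (((hf x (interior_subset hx)).mono interior_subset).add
      ((hasDerivWithinAt_id x _).const_mul c)).congr_deriv (by ring))
    (fun x hx => by linarith [hf' x (interior_subset hx)])

lemma hasDerivAt_of_hasDerivWithinAt_Iic_Ici {f : ℝ → ℝ} {f' y z : ℝ}
    (hl : y ≤ z → HasDerivWithinAt f f' (Iic z) y)
    (hr : z ≤ y → HasDerivWithinAt f f' (Ici z) y) : HasDerivAt f f' y := by
  rcases lt_trichotomy y z with h | rfl | h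
  · exact (hl h.le).hasDerivAt (Iic_mem_nhds h)
  · simpa only [Iic_union_Ici, hasDerivWithinAt_univ] using (hl le_rfl).union (hr le_rfl)
  · exact (hr h.le).hasDerivAt (Ici_mem_nhds h)

lemma convexOn_of_hasDerivAt_of_monotoneOn {D : Set ℝ} (hD : Convex ℝ D) {f f' : ℝ → ℝ}
    (hf : ContinuousOn f D) (hf' : ∀ x ∈ interior D, HasDerivAt f (f' x) x)
    (hmono : MonotoneOn f' (interior D)) : ConvexOn ℝ D f :=
  MonotoneOn.convexOn_of_deriv hD hf
    (fun x hx => (hf' x hx).differentiableAt.differentiableWithinAt)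
    (fun a ha b hb hab => by rw [(hf' a ha).deriv, (hf' b hb).deriv]; exact hmono ha hb hab)

lemma ConvexOn.map_combo_le_of_add_sq {s : Set ℝ} {f : ℝ → ℝ} {c : ℝ}
    (hf : ConvexOn ℝ s (fun y => f y + c / 2 * y ^ 2)) {θ a b : ℝ} (hθ : θ ∈ Icc (0:ℝ) 1)
    (ha : a ∈ s) (hb : b ∈ s) :
    f (θ * a + (1 - θ) * b) ≤ θ * f a + (1 - θ) * f b + c / 2 * θ * (1 - θ) * |a - b| ^ 2 := by
  have key := hf.2 ha hb hθ.1 (sub_nonneg.2 hθ.2) (by ring)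
  simp only [smul_eq_mul] at key
  rw [sq_abs]
  linear_combination key

/-- `cohesiveEnergy ψ ψd z y` is `Φ(y, z)`, with `ψd = ψ'`. -/
noncomputable def cohesiveEnergy (ψ ψd : ℝ → ℝ) (z y : ℝ) : ℝ :=
  if y < z then ψd z / (2 * z) * y ^ 2 + ψ z - z * ψd z / 2 else ψ y

noncomputable def cohesiveEnergyDeriv (ψd : ℝ → ℝ) (z y : ℝ) : ℝ :=
  if y < z then ψd z / z * y else ψd y

section cohesiveEnergy

variable {ψ ψd : ℝ → ℝ} {z : ℝ}

lemma cohesiveEnergy_eqOn_Iic :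
    EqOn (cohesiveEnergy ψ ψd z) (fun y => ψd z / (2 * z) * y ^ 2 + ψ z - z * ψd z / 2)
      (Iic z) := by
  intro y hy
  rcases (mem_Iic.1 hy).lt_or_eq with h | rfl
  · simp only [cohesiveEnergy, if_pos h]
  · simp only [cohesiveEnergy, lt_irrefl, if_false]
    rcases eq_or_ne y 0 with rfl | hy0
    · simp
    · field_simp
      ring

lemma cohesiveEnergy_eqOn_Ici : EqOn (cohesiveEnergy ψ ψd z) ψ (Ici z) :=
  fun _ hy => if_neg (not_lt.2 hy)

lemma continuousOn_cohesiveEnergy (hψ : ContinuousOn ψ (Ici 0)) (hz : 0 ≤ z) :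
    ContinuousOn (cohesiveEnergy ψ ψd z) (Ici 0) := by
  have h := ((by fun_prop : Continuous fun y : ℝ =>
      ψd z / (2 * z) * y ^ 2 + ψ z - z * ψd z / 2).continuousOn.congr
    cohesiveEnergy_eqOn_Iic).union_of_isClosed
    ((hψ.mono (Ici_subset_Ici.2 hz)).congr cohesiveEnergy_eqOn_Ici) isClosed_Iic isClosed_Ici
  rw [Iic_union_Ici] at h
  exact h.mono (subset_univ _)

lemma hasDerivAt_cohesiveEnergy (hψ : ∀ y ∈ Ici 0, HasDerivWithinAt ψ (ψd y) (Ici 0) y)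
    (hz : 0 ≤ z) {y : ℝ} (hy : 0 < y) :
    HasDerivAt (cohesiveEnergy ψ ψd z) (cohesiveEnergyDeriv ψd z y) y := by
  apply hasDerivAt_of_hasDerivWithinAt_Iic_Ici (z := z)
  · intro hyz
    have hz0 : z ≠ 0 := (hy.trans_le hyz).ne'
    have hval : cohesiveEnergyDeriv ψd z y = ψd z / z * y := by
      rcases hyz.lt_or_eq with h | rfl
      · exact if_pos h
      · rw [cohesiveEnergyDeriv, if_neg (lt_irrefl y)]
        field_simp
    have hq : HasDerivAt (fun x => ψd z / (2 * z) * x ^ 2 + ψ z - z * ψd z / 2)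
        (cohesiveEnergyDeriv ψd z y) y :=
      hval ▸ ((((hasDerivAt_pow 2 y).const_mul (ψd z / (2 * z))).add_const (ψ z)).sub_const
        (z * ψd z / 2)).congr_deriv (by field_simp; ring)
    exact hq.hasDerivWithinAt.congr (fun x hx => cohesiveEnergy_eqOn_Iic hx)
      (cohesiveEnergy_eqOn_Iic hyz)
  · intro hzy
    rw [cohesiveEnergyDeriv, if_neg (not_lt.2 hzy)]
    exact ((hψ y hy.le).mono (Ici_subset_Ici.2 hz)).congr
      (fun x hx => cohesiveEnergy_eqOn_Ici hx) (cohesiveEnergy_eqOn_Ici hzy)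

lemma monotoneOn_cohesiveEnergyDeriv_add_mul {c : ℝ} (hc : 0 ≤ c) (hψd : 0 ≤ ψd z)
    (hmono : MonotoneOn (fun y => ψd y + c * y) (Ici z)) :
    MonotoneOn (fun y => cohesiveEnergyDeriv ψd z y + c * y) (Ioi 0) := by
  intro a ha b hb hab
  by_cases hbz : b < z
  · have haz : a < z := hab.trans_lt hbz
    have hslope : 0 ≤ ψd z / z + c := by
      have : 0 < z := (mem_Ioi.1 ha).trans haz
      positivity
    simp only [cohesiveEnergyDeriv, if_pos haz, if_pos hbz]
    nlinarith [mul_le_mul_of_nonneg_left hab hslope]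
  by_cases haz : a < z
  · have hz0 : 0 < z := (mem_Ioi.1 ha).trans haz
    have hslope : 0 ≤ ψd z / z + c := by positivity
    simp only [cohesiveEnergyDeriv, if_pos haz, if_neg hbz]
    calc ψd z / z * a + c * a = (ψd z / z + c) * a := by ring
      _ ≤ (ψd z / z + c) * z := mul_le_mul_of_nonneg_left haz.le hslope
      _ = ψd z + c * z := by field_simp
      _ ≤ ψd b + c * b := hmono self_mem_Ici (not_lt.1 hbz) (not_lt.1 hbz)
  simp only [cohesiveEnergyDeriv, if_neg haz, if_neg hbz]
  exact hmono (not_lt.1 haz) (not_lt.1 hbz) hab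

lemma convexOn_cohesiveEnergy_add_sq (hψ : ∀ y ∈ Ici 0, HasDerivWithinAt ψ (ψd y) (Ici 0) y)
    (hz : 0 ≤ z) {c : ℝ} (hc : 0 ≤ c) (hψd : 0 ≤ ψd z)
    (hmono : MonotoneOn (fun y => ψd y + c * y) (Ici z)) :
    ConvexOn ℝ (Ici 0) (fun y => cohesiveEnergy ψ ψd z y + c / 2 * y ^ 2) := by
  refine convexOn_of_hasDerivAt_of_monotoneOn (convex_Ici 0)
    ((continuousOn_cohesiveEnergy (fun y hy => (hψ y hy).continuousWithinAt) hz).add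
      (by fun_prop)) (f' := fun y => cohesiveEnergyDeriv ψd z y + c * y) ?_ ?_
  · rw [interior_Ici]
    intro y hy
    exact ((hasDerivAt_cohesiveEnergy hψ hz hy).add
      ((hasDerivAt_pow 2 y).const_mul (c / 2))).congr_deriv (by push_cast; ring)
  · rw [interior_Ici]
    exact monotoneOn_cohesiveEnergyDeriv_add_mul hc hψd hmono

end cohesiveEnergy

theorem stmt_3_general (ψ ψd ψdd : ℝ → ℝ) (lam : ℝ) (hlam : 0 < lam)
    (hmono : StrictMonoOn ψ (Ici (0:ℝ)))
    (hd1 : ∀ z ∈ Ici (0:ℝ), HasDerivWithinAt ψ (ψd z) (Ici (0:ℝ)) z)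
    (hd2 : ∀ z ∈ Ici (0:ℝ), HasDerivWithinAt ψd (ψdd z) (Ici (0:ℝ)) z)
    (hlow : ∀ z ∈ Ici (0:ℝ), -lam ≤ ψdd z)
    (Φ : ℝ → ℝ → ℝ)
    (hΦ : ∀ y ∈ Ici (0:ℝ), ∀ z ∈ Ici (0:ℝ),
      Φ y z = if y < z then ψd z / (2*z) * y^2 + ψ z - z * ψd z / 2 else ψ y) :
    ∀ z ∈ Ici (0:ℝ), ∀ θ ∈ Icc (0:ℝ) 1, ∀ ya ∈ Ici (0:ℝ), ∀ yb ∈ Ici (0:ℝ),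
      Φ (θ * ya + (1 - θ) * yb) z
        ≤ θ * Φ ya z + (1 - θ) * Φ yb z + lam / 2 * θ * (1 - θ) * |ya - yb|^2 := by
  intro z hz θ hθ ya hya yb hyb
  have hψd : 0 ≤ ψd z :=
    (hd1 z hz).derivWithin (uniqueDiffOn_Ici 0 z hz) ▸ hmono.monotoneOn.derivWithin_nonneg
  have hslope := monotoneOn_add_mul_of_hasDerivWithinAt (convex_Ici 0) hd2 hlow
  have hconv := convexOn_cohesiveEnergy_add_sq hd1 hz hlam.le hψd
    (hslope.mono (Ici_subset_Ici.2 hz))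
  have hmid : θ * ya + (1 - θ) * yb ∈ Ici (0:ℝ) :=
    (convex_Ici 0) hya hyb hθ.1 (sub_nonneg.2 hθ.2) (by ring)
  rw [hΦ _ hmid z hz, hΦ ya hya z hz, hΦ yb hyb z hz]
  exact hconv.map_combo_le_of_add_sq hθ hya hyb

/-- for every `z ≥ 0` the function `y ↦ Φ(y,z)` is `λ`-convex on `[0,∞)`. -/
theorem stmt_3 (ψ ψd ψdd : ℝ → ℝ) (lam : ℝ) (hlam : 0 < lam)
    (hψmap : ∀ z ∈ Ici (0:ℝ), 0 ≤ ψ z)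
    (hmono : StrictMonoOn ψ (Ici (0:ℝ)))
    (hbdd : BddAbove (ψ '' Ici (0:ℝ)))
    (hconc : ConcaveOn ℝ (Ici (0:ℝ)) ψ)
    (hd1 : ∀ z ∈ Ici (0:ℝ), HasDerivWithinAt ψ (ψd z) (Ici (0:ℝ)) z)
    (hd2 : ∀ z ∈ Ici (0:ℝ), HasDerivWithinAt ψd (ψdd z) (Ici (0:ℝ)) z)
    (hd2cont : ContinuousOn ψdd (Ici (0:ℝ)))
    (hψ0 : ψ 0 = 0) (hψd0 : 0 < ψd 0)
    (hlow : ∀ z ∈ Ici (0:ℝ), -lam ≤ ψdd z)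
    (Φ : ℝ → ℝ → ℝ)
    (hΦ : ∀ y ∈ Ici (0:ℝ), ∀ z ∈ Ici (0:ℝ),
      Φ y z = if y < z then ψd z / (2*z) * y^2 + ψ z - z * ψd z / 2 else ψ y) :
    ∀ z ∈ Ici (0:ℝ), ∀ θ ∈ Icc (0:ℝ) 1, ∀ ya ∈ Ici (0:ℝ), ∀ yb ∈ Ici (0:ℝ),
      Φ (θ * ya + (1 - θ) * yb) z
        ≤ θ * Φ ya z + (1 - θ) * Φ yb z + lam / 2 * θ * (1 - θ) * |ya - yb|^2 :=
  stmt_3_general ψ ψd ψdd lam hlam hmono hd1 hd2 hlow Φ hΦ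
end

section
/- For every ε > 0 and all s, z ≥ 0 there holds |∂_yΦ_ε(s,z) − ∂_yΦ(s,z)| ≤ ψ'(0)·χ_{[0,z_ε]}(max(s,z)). -/
/-!
Both `y`-derivatives are `g'(m)` at `m = max s z` (for `g = ψ`, resp. `ψ_ε`), multiplied
by `s / m ≤ 1` when `s < z`. Since `ψ_ε' = ψ'` on `(z_ε, ∞)` and `ψ_ε'(x) = x/ε` on `[0, z_ε]`,
it remains to see `0 ≤ x/ε ≤ ψ'(x) ≤ ψ'(0)` for `x ≤ z_ε`: `ψ'` is antitone by concavity,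
so `x ≤ z_ε = ε ψ'(z_ε) ≤ ε ψ'(x)`.
-/

set_option autoImplicit false

open Set Filter Topology

theorem ConcaveOn.antitoneOn_of_hasDerivWithinAt {f f' : ℝ → ℝ} {a : ℝ}
    (hf : ConcaveOn ℝ (Ici a) f) (hf' : ∀ x ∈ Ici a, HasDerivWithinAt f (f' x) (Ici a) x) :
    AntitoneOn f' (Ici a) := by
  intro x hx y hy hxy
  have h := hf.antitoneOn_derivWithin (fun t ht => (hf' t ht).differentiableWithinAt) hx hy hxy
  rwa [(hf' x hx).derivWithin (uniqueDiffOn_Ici a x hx),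
    (hf' y hy).derivWithin (uniqueDiffOn_Ici a y hy)] at h

theorem hasDerivWithinAt_Ici_of_eqOn_Icc_of_eqOn_Ici {f g h : ℝ → ℝ} {a b x d : ℝ}
    (hx : b ≤ x) (hfg : EqOn f g (Icc b a)) (hfh : EqOn f h (Ici a))
    (hg : x ≤ a → HasDerivWithinAt g d (Ici b) x)
    (hh : a ≤ x → HasDerivWithinAt h d (Ici b) x) :
    HasDerivWithinAt f d (Ici b) x := by
  rcases lt_trichotomy x a with hxa | rfl | hax
  · refine (hg hxa.le).congr_of_eventuallyEq ?_ (hfg ⟨hx, hxa.le⟩)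
    filter_upwards [self_mem_nhdsWithin, mem_nhdsWithin_of_mem_nhds (Iio_mem_nhds hxa)]
      with t htb hta using hfg ⟨htb, le_of_lt hta⟩
  · have hleft : HasDerivWithinAt f d (Icc b x) x :=
      ((hg le_rfl).mono Icc_subset_Ici_self).congr hfg (hfg ⟨hx, le_rfl⟩)
    have hright : HasDerivWithinAt f d (Ici x) x :=
      ((hh le_rfl).mono (Ici_subset_Ici.2 hx)).congr hfh (hfh (mem_Ici.2 le_rfl))
    simpa only [Icc_union_Ici_eq_Ici hx] using hleft.union hright
  · refine (hh hax.le).congr_of_eventuallyEq ?_ (hfh hax.le)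
    filter_upwards [mem_nhdsWithin_of_mem_nhds (Ioi_mem_nhds hax)] with t hta
      using hfh (mem_Ici.2 (mem_Ioi.1 hta).le)

/-- `∂_y Φ(s, z)` for the cohesive density `Φ` built from `f` with `f' = fd`. -/
noncomputable def cohesiveSlope (fd : ℝ → ℝ) (s z : ℝ) : ℝ :=
  if s < z then fd z / z * s else fd s

theorem hasDerivWithinAt_cohesive {f fd : ℝ → ℝ} {F : ℝ → ℝ → ℝ}
    (hf : ∀ x ∈ Ici (0:ℝ), HasDerivWithinAt f (fd x) (Ici 0) x)
    (hF : ∀ y ∈ Ici (0:ℝ), ∀ z ∈ Ici (0:ℝ),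
      F y z = if y < z then fd z / (2*z) * y^2 + f z - z * fd z / 2 else f y)
    {s z : ℝ} (hs : 0 ≤ s) (hz : 0 ≤ z) :
    HasDerivWithinAt (fun y => F y z) (cohesiveSlope fd s z) (Ici 0) s := by
  have hF_ge : ∀ y, z ≤ y → F y z = f y := fun y hy => by
    rw [hF y (hz.trans hy) z hz, if_neg (not_lt.2 hy)]
  rcases hz.eq_or_lt with rfl | hz0
  · rw [cohesiveSlope, if_neg (not_lt.2 hs)]
    exact (hf s hs).congr hF_ge (hF_ge s hs)
  set Q : ℝ → ℝ := fun y => fd z / (2*z) * y^2 + f z - z * fd z / 2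
  have hQz : Q z = f z := by simp only [Q]; field_simp; ring
  have hQ : HasDerivAt Q (fd z / z * s) s := by
    have h := (((hasDerivAt_pow 2 s).const_mul (fd z / (2*z))).add_const (f z)).sub_const
      (z * fd z / 2)
    refine h.congr_deriv ?_
    field_simp
    ring
  refine hasDerivWithinAt_Ici_of_eqOn_Icc_of_eqOn_Ici hs (g := Q) (a := z)
    (fun y hy => ?_) hF_ge (fun hsz => ?_) (fun hzs => ?_)
  · rcases hy.2.lt_or_eq with hyz | rfl
    · rw [hF y hy.1 z hz, if_pos hyz]
    · rw [hF_ge y le_rfl, hQz]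
  · rcases hsz.lt_or_eq with hsz | rfl
    · rw [cohesiveSlope, if_pos hsz]
      exact hQ.hasDerivWithinAt
    · rw [cohesiveSlope, if_neg (lt_irrefl s), ← div_mul_cancel₀ (fd s) hz0.ne']
      exact hQ.hasDerivWithinAt
  · rw [cohesiveSlope, if_neg (not_lt.2 hzs)]
    exact hf s hs

theorem abs_cohesiveSlope_sub_le (g g' : ℝ → ℝ) {s : ℝ} (hs : 0 ≤ s) (z : ℝ) :
    |cohesiveSlope g s z - cohesiveSlope g' s z| ≤ |g (max s z) - g' (max s z)| := by
  unfold cohesiveSlope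
  split_ifs with hsz
  · have hz : 0 < z := hs.trans_lt hsz
    rw [max_eq_right hsz.le, ← sub_mul, ← sub_div, abs_mul, abs_div, abs_of_pos hz,
      abs_of_nonneg hs, div_mul_eq_mul_div, div_le_iff₀ hz]
    exact mul_le_mul_of_nonneg_left hsz.le (abs_nonneg _)
  · rw [max_eq_left (not_lt.1 hsz)]

theorem regularization_hasDerivWithinAt {ψ ψd ψε : ℝ → ℝ} {ε zε : ℝ}
    (hψ : ∀ z ∈ Ici (0:ℝ), HasDerivWithinAt ψ (ψd z) (Ici (0:ℝ)) z) (hzε : 0 ≤ zε)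
    (hfix : ε * ψd zε = zε) (hε : ε ≠ 0)
    (hψε : ∀ z ∈ Ici (0:ℝ),
      ψε z = if z ≤ zε then z^2 / (2*ε) else ψ z - ψ zε + zε^2 / (2*ε))
    {x : ℝ} (hx : 0 ≤ x) :
    HasDerivWithinAt ψε (if x ≤ zε then x / ε else ψd x) (Ici 0) x := by
  refine hasDerivWithinAt_Ici_of_eqOn_Icc_of_eqOn_Ici hx (a := zε)
    (g := fun t => t^2 / (2*ε)) (h := fun t => ψ t - ψ zε + zε^2 / (2*ε))
    (fun t ht => by rw [hψε t ht.1, if_pos ht.2]) (fun t ht => ?_)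
    (fun hxz => ?_) (fun hzx => ?_)
  · rcases (mem_Ici.1 ht).lt_or_eq with hzt | hzt
    · rw [hψε t (hzε.trans hzt.le), if_neg (not_le.2 hzt)]
    · rw [← hzt, hψε zε hzε, if_pos le_rfl]; ring
  · rw [if_pos hxz]
    refine (((hasDerivAt_pow 2 x).div_const (2*ε)).congr_deriv ?_).hasDerivWithinAt
    field_simp
    ring
  · have hd : HasDerivWithinAt (fun t => ψ t - ψ zε + zε^2 / (2*ε)) (ψd x) (Ici 0) x :=
      ((hψ x hx).sub_const _).add_const _
    split_ifs with hxz
    · obtain rfl := le_antisymm hxz hzx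
      convert hd using 1
      rw [div_eq_iff hε, mul_comm, hfix]
    · exact hd

theorem abs_regularization_slope_sub_le {ψd : ℝ → ℝ} {ε zε x : ℝ} (hε : 0 < ε)
    (hzε : 0 ≤ zε) (hanti : AntitoneOn ψd (Ici 0)) (hfix : ε * ψd zε = zε) (hx : 0 ≤ x) :
    |(if x ≤ zε then x / ε else ψd x) - ψd x|
      ≤ ψd 0 * Set.indicator (Icc 0 zε) (fun _ => (1:ℝ)) x := by
  split_ifs with hxz
  · have hxψd : x / ε ≤ ψd x := by
      rw [div_le_iff₀' hε]
      calc x ≤ zε := hxz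
        _ = ε * ψd zε := hfix.symm
        _ ≤ ε * ψd x := by gcongr; exact hanti hx hzε hxz
    have hψd0 : ψd x ≤ ψd 0 := hanti (mem_Ici.2 le_rfl) hx hx
    rw [indicator_of_mem (mem_Icc.2 ⟨hx, hxz⟩), mul_one]
    exact abs_sub_le_of_nonneg_of_le (by positivity) (hxψd.trans hψd0)
      ((div_nonneg hx hε.le).trans hxψd) hψd0
  · rw [indicator_of_notMem (fun h => hxz h.2), sub_self, abs_zero, mul_zero]

theorem stmt_14_general (ψ ψd : ℝ → ℝ)
    (hconc : ConcaveOn ℝ (Ici (0:ℝ)) ψ)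
    (hd1 : ∀ z ∈ Ici (0:ℝ), HasDerivWithinAt ψ (ψd z) (Ici (0:ℝ)) z)
    (Φ : ℝ → ℝ → ℝ)
    (hΦ : ∀ y ∈ Ici (0:ℝ), ∀ z ∈ Ici (0:ℝ),
      Φ y z = if y < z then ψd z / (2*z) * y^2 + ψ z - z * ψd z / 2 else ψ y)
    (ε : ℝ) (hε : 0 < ε) (zε : ℝ) (hzε : 0 < zε)
    (hfix : ε * ψd zε = zε)
    (ψε ψεd : ℝ → ℝ)
    (hψε : ∀ z ∈ Ici (0:ℝ),
      ψε z = if z ≤ zε then z^2 / (2*ε) else ψ z - ψ zε + zε^2 / (2*ε))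
    (hψεd : ∀ z ∈ Ici (0:ℝ), HasDerivWithinAt ψε (ψεd z) (Ici (0:ℝ)) z)
    (Φε : ℝ → ℝ → ℝ)
    (hΦε : ∀ y ∈ Ici (0:ℝ), ∀ z ∈ Ici (0:ℝ),
      Φε y z = if y < z then ψεd z / (2*z) * y^2 + ψε z - z * ψεd z / 2 else ψε y)
    (Φy Φεy : ℝ → ℝ → ℝ)
    (hΦy : ∀ z ∈ Ici (0:ℝ), ∀ s ∈ Ici (0:ℝ),
      HasDerivWithinAt (fun y => Φ y z) (Φy s z) (Ici (0:ℝ)) s)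
    (hΦεy : ∀ z ∈ Ici (0:ℝ), ∀ s ∈ Ici (0:ℝ),
      HasDerivWithinAt (fun y => Φε y z) (Φεy s z) (Ici (0:ℝ)) s) :
    ∀ s ∈ Ici (0:ℝ), ∀ z ∈ Ici (0:ℝ),
      |Φεy s z - Φy s z|
        ≤ ψd 0 * Set.indicator (Icc 0 zε) (fun _ => (1:ℝ)) (max s z) := by
  intro s hs z hz
  have hm : 0 ≤ max s z := le_max_of_le_left hs
  have hΦy_eq := (uniqueDiffOn_Ici 0 s hs).eq_deriv _ (hΦy z hz s hs)
    (hasDerivWithinAt_cohesive hd1 hΦ hs hz)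
  have hΦεy_eq := (uniqueDiffOn_Ici 0 s hs).eq_deriv _ (hΦεy z hz s hs)
    (hasDerivWithinAt_cohesive hψεd hΦε hs hz)
  have hψεd_eq := (uniqueDiffOn_Ici 0 _ hm).eq_deriv _ (hψεd _ hm)
    (regularization_hasDerivWithinAt hd1 hzε.le hfix hε.ne' hψε hm)
  calc |Φεy s z - Φy s z|
      ≤ |ψεd (max s z) - ψd (max s z)| := by
        rw [hΦy_eq, hΦεy_eq]; exact abs_cohesiveSlope_sub_le ψεd ψd hs z
    _ ≤ _ := by
        rw [hψεd_eq]
        exact abs_regularization_slope_sub_le hε hzε.le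
          (hconc.antitoneOn_of_hasDerivWithinAt hd1) hfix hm

/-- `|∂_yΦ_ε(s,z) - ∂_yΦ(s,z)| ≤ ψ'(0)·χ_[0,z_ε](max s z)` for all
`s, z ≥ 0`. -/
theorem stmt_14 (ψ ψd ψdd : ℝ → ℝ) (lam : ℝ) (hlam : 0 < lam)
    (hψmap : ∀ z ∈ Ici (0:ℝ), 0 ≤ ψ z)
    (hmono : StrictMonoOn ψ (Ici (0:ℝ)))
    (hbdd : BddAbove (ψ '' Ici (0:ℝ)))
    (hconc : ConcaveOn ℝ (Ici (0:ℝ)) ψ)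
    (hd1 : ∀ z ∈ Ici (0:ℝ), HasDerivWithinAt ψ (ψd z) (Ici (0:ℝ)) z)
    (hd2 : ∀ z ∈ Ici (0:ℝ), HasDerivWithinAt ψd (ψdd z) (Ici (0:ℝ)) z)
    (hd2cont : ContinuousOn ψdd (Ici (0:ℝ)))
    (hψ0 : ψ 0 = 0) (hψd0 : 0 < ψd 0)
    (hlow : ∀ z ∈ Ici (0:ℝ), -lam ≤ ψdd z)
    (Φ : ℝ → ℝ → ℝ)
    (hΦ : ∀ y ∈ Ici (0:ℝ), ∀ z ∈ Ici (0:ℝ),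
      Φ y z = if y < z then ψd z / (2*z) * y^2 + ψ z - z * ψd z / 2 else ψ y)
    (ε : ℝ) (hε : 0 < ε) (zε : ℝ) (hzε : 0 < zε)
    (hfix : ε * ψd zε = zε)
    (huniq : ∀ z : ℝ, 0 ≤ z → ε * ψd z = z → z = zε)
    (ψε ψεd : ℝ → ℝ)
    (hψε : ∀ z ∈ Ici (0:ℝ),
      ψε z = if z ≤ zε then z^2 / (2*ε) else ψ z - ψ zε + zε^2 / (2*ε))
    (hψεd : ∀ z ∈ Ici (0:ℝ), HasDerivWithinAt ψε (ψεd z) (Ici (0:ℝ)) z)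
    (Φε : ℝ → ℝ → ℝ)
    (hΦε : ∀ y ∈ Ici (0:ℝ), ∀ z ∈ Ici (0:ℝ),
      Φε y z = if y < z then ψεd z / (2*z) * y^2 + ψε z - z * ψεd z / 2 else ψε y)
    (Φy Φεy : ℝ → ℝ → ℝ)
    (hΦy : ∀ z ∈ Ici (0:ℝ), ∀ s ∈ Ici (0:ℝ),
      HasDerivWithinAt (fun y => Φ y z) (Φy s z) (Ici (0:ℝ)) s)
    (hΦεy : ∀ z ∈ Ici (0:ℝ), ∀ s ∈ Ici (0:ℝ),
      HasDerivWithinAt (fun y => Φε y z) (Φεy s z) (Ici (0:ℝ)) s) :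
    ∀ s ∈ Ici (0:ℝ), ∀ z ∈ Ici (0:ℝ),
      |Φεy s z - Φy s z|
        ≤ ψd 0 * Set.indicator (Icc 0 zε) (fun _ => (1:ℝ)) (max s z) :=
  stmt_14_general ψ ψd hconc hd1 Φ hΦ ε hε zε hzε hfix ψε ψεd hψε hψεd Φε hΦε Φy Φεy hΦy hΦεy
end
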